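/- Single-edge influence on a single node's output for linear GCN (Corollary 1 / appendix E.5): assume H := Xᵀ Cᵀ C X is invertible and symmetric-weighted inner products are defined by ⟨a, b⟩_{H⁻¹} := aᵀ H⁻¹ b. Let Ξ := e_i e_jᵀ + e_j e_iᵀ, w*(ε) := (Xᵀ (C + εΞ)ᵀ (C + εΞ) X)⁻¹ Xᵀ (C + εΞ)ᵀ y with w* := w*(0), and P(ε) := (C + εΞ) X w*(ε). Then for every node index k, the k-th coordinate of the derivative of P at ε = 0 equals 1{k = i}·(x_jᵀ w*) + 1{k = j}·(x_iᵀ w*) − ⟨(x_jᵀ w*) z_i + (x_iᵀ w*) z_j, z_k⟩_{H⁻¹} + ⟨(y_j − z_jᵀ w*) x_i + (y_i − z_iᵀ w*) x_j, z_k⟩_{H⁻¹}, where z_l denotes the l-th row of Z := C X and 1{·} is the indicator function. -/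

import Mathlib

/-!
Write `Z(ε) := (C + εΞ) X`. The output is the least-squares fit `P(ε) = Z(ε) w(ε)` with
`w(ε) = (ZᵀZ)⁻¹ Zᵀ y`, so the product rule and `d(A⁻¹) = -A⁻¹ A' A⁻¹` give
`w' = H⁻¹ (Z'ᵀ (y - Z w*) - Zᵀ Z' w*)` and `P' = Z' w* + Z w'`, where `Z' = Ξ X`.
Since `Ξ v = v_j e_i + v_i e_j`, the vectors `Z' w*`, `Z'ᵀ (y - Z w*)` and `Zᵀ Z' w*` are
`(x_jᵀ w*) e_i + (x_iᵀ w*) e_j`, `(y_j - z_jᵀ w*) x_i + (y_i - z_iᵀ w*) x_j` and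
`(x_jᵀ w*) z_i + (x_iᵀ w*) z_j`, and the symmetry of `H⁻¹` moves `z_k` into the second slot of the inner products.
-/

open Matrix Filter Topology
open scoped Matrix.Norms.Elementwise

section Calculus

variable {𝕜 : Type*} [NontriviallyNormedField 𝕜] {l m n : Type*} {x : 𝕜}

theorem hasDerivAt_matrix_iff [Fintype n] {A : 𝕜 → Matrix m n 𝕜} {A' : Matrix m n 𝕜} :
    HasDerivAt A A' x ↔ ∀ i j, HasDerivAt (fun t => A t i j) (A' i j) x :=
  hasDerivAt_pi.trans (forall_congr' fun _ => hasDerivAt_pi)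

theorem HasDerivAt.matrix_mulVec [Fintype n] {A : 𝕜 → Matrix m n 𝕜} {v : 𝕜 → n → 𝕜}
    {A' : Matrix m n 𝕜} {v' : n → 𝕜} (hA : HasDerivAt A A' x) (hv : HasDerivAt v v' x) :
    HasDerivAt (fun t => A t *ᵥ v t) (A' *ᵥ v x + A x *ᵥ v') x := by
  refine hasDerivAt_pi.2 fun i => ?_
  simp only [mulVec, dotProduct, Pi.add_apply, ← Finset.sum_add_distrib]
  exact HasDerivAt.fun_sum fun j _ =>
    (hasDerivAt_matrix_iff.1 hA i j).fun_mul (hasDerivAt_pi.1 hv j)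

theorem HasDerivAt.matrix_inv [Fintype n] [DecidableEq n] {A : 𝕜 → Matrix n n 𝕜}
    {A' : Matrix n n 𝕜} (hA : HasDerivAt A A' x) (hx : IsUnit (A x).det) :
    HasDerivAt (fun t => (A t)⁻¹) (-((A x)⁻¹ * A' * (A x)⁻¹)) x := by
  have hdet : ContinuousAt (fun t => (A t).det) x :=
    continuous_id.matrix_det.continuousAt.comp hA.continuousAt
  have hinv : ContinuousAt (fun t => (A t)⁻¹) x := by
    refine (continuousAt_matrix_inv _ ?_).comp hA.continuousAt
    simpa only [Ring.inverse_eq_inv'] using continuousAt_inv₀ hx.ne_zero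
  have hunit : ∀ᶠ t in 𝓝 x, IsUnit (A t).det := by
    simpa only [isUnit_iff_ne_zero] using hdet.eventually_ne hx.ne_zero
  refine hasDerivAt_iff_tendsto_slope.2 <|
    (((hinv.tendsto.mono_left nhdsWithin_le_nhds).mul hA.tendsto_slope).mul_const _).neg.congr' ?_
  filter_upwards [nhdsWithin_le_nhds hunit] with t ht
  -- `(A t)⁻¹ - (A x)⁻¹ = -((A t)⁻¹ * (A t - A x) * (A x)⁻¹)`
  rw [slope_def_module, slope_def_module, Matrix.mul_smul, Matrix.smul_mul, ← smul_neg,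
    Matrix.mul_sub, Matrix.sub_mul, nonsing_inv_mul _ ht, Matrix.one_mul,
    Matrix.mul_assoc, mul_nonsing_inv _ hx, Matrix.mul_one, neg_sub]

variable [Fintype m] [Fintype n]

theorem HasDerivAt.matrix_transpose {A : 𝕜 → Matrix m n 𝕜} {A' : Matrix m n 𝕜}
    (hA : HasDerivAt A A' x) : HasDerivAt (fun t => (A t)ᵀ) A'ᵀ x :=
  hasDerivAt_matrix_iff.2 fun i j => hasDerivAt_matrix_iff.1 hA j i

theorem HasDerivAt.matrix_mul {A : 𝕜 → Matrix l m 𝕜} {B : 𝕜 → Matrix m n 𝕜}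
    {A' : Matrix l m 𝕜} {B' : Matrix m n 𝕜} (hA : HasDerivAt A A' x) (hB : HasDerivAt B B' x) :
    HasDerivAt (fun t => A t * B t) (A' * B x + A x * B') x := by
  refine hasDerivAt_matrix_iff.2 fun i k => ?_
  simp only [mul_apply, Matrix.add_apply, ← Finset.sum_add_distrib]
  exact HasDerivAt.fun_sum fun j _ =>
    (hasDerivAt_matrix_iff.1 hA i j).fun_mul (hasDerivAt_matrix_iff.1 hB j k)

noncomputable def leastSquares [DecidableEq n] (Z : Matrix m n 𝕜) (y : m → 𝕜) : n → 𝕜 :=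
  (Zᵀ * Z)⁻¹ *ᵥ (Zᵀ *ᵥ y)

theorem leastSquares_mul [DecidableEq n] {p : Type*} [Fintype p] (A : Matrix p m 𝕜)
    (X : Matrix m n 𝕜) (y : p → 𝕜) :
    leastSquares (A * X) y = (Xᵀ * Aᵀ * A * X)⁻¹ *ᵥ ((Xᵀ * Aᵀ) *ᵥ y) := by
  simp only [leastSquares, transpose_mul, Matrix.mul_assoc]

theorem HasDerivAt.leastSquares [DecidableEq n] {Z : 𝕜 → Matrix m n 𝕜} {Z' : Matrix m n 𝕜}
    (hZ : HasDerivAt Z Z' x) (hH : IsUnit ((Z x)ᵀ * Z x).det) (y : m → 𝕜) :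
    HasDerivAt (fun t => leastSquares (Z t) y)
      (((Z x)ᵀ * Z x)⁻¹ *ᵥ (Z'ᵀ *ᵥ (y - Z x *ᵥ leastSquares (Z x) y)
        - (Z x)ᵀ *ᵥ (Z' *ᵥ leastSquares (Z x) y))) x := by
  refine (((hZ.matrix_transpose.matrix_mul hZ).matrix_inv hH).matrix_mulVec
    (hZ.matrix_transpose.matrix_mulVec (hasDerivAt_const x y))).congr_deriv ?_
  simp only [_root_.leastSquares, neg_mulVec, ← mulVec_mulVec, add_mulVec, mulVec_add, mulVec_sub,
    mulVec_zero, add_zero]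
  abel

end Calculus

namespace Matrix

variable {R n : Type*} [Fintype n]

theorem IsSymm.dotProduct_mulVec_comm [CommSemiring R] {A : Matrix n n R} (hA : A.IsSymm)
    (v w : n → R) : v ⬝ᵥ A *ᵥ w = w ⬝ᵥ A *ᵥ v := by
  rw [dotProduct_mulVec, ← mulVec_transpose, hA.eq, dotProduct_comm]

theorem transpose_mulVec_single [CommSemiring R] [DecidableEq n] {p : Type*} (M : Matrix n p R)
    (i : n) (a : R) : Mᵀ *ᵥ Pi.single i a = a • M i := by
  ext; simp [mulVec_single, mul_comm]

theorem single_add_single_mulVec [NonAssocSemiring R] [DecidableEq n] (i j : n) (v : n → R) :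
    (single i j 1 + single j i 1) *ᵥ v = Pi.single i (v j) + Pi.single j (v i) := by
  simp [add_mulVec, single_mulVec, Pi.single]

theorem single_add_single_mul_mulVec [Semiring R] [DecidableEq n] {p : Type*} [Fintype p]
    (i j : n) (X : Matrix n p R) (w : p → R) :
    ((single i j (1 : R) + single j i 1) * X) *ᵥ w =
      Pi.single i (X j ⬝ᵥ w) + Pi.single j (X i ⬝ᵥ w) := by
  rw [← mulVec_mulVec, single_add_single_mulVec]
  rfl

theorem transpose_single_add_single_mul_mulVec [CommSemiring R] [DecidableEq n] {p : Type*}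
    (i j : n) (X : Matrix n p R) (r : n → R) :
    ((single i j (1 : R) + single j i 1) * X)ᵀ *ᵥ r = r j • X i + r i • X j := by
  rw [transpose_mul, ← mulVec_mulVec, transpose_add, transpose_single, transpose_single,
    add_comm, single_add_single_mulVec, mulVec_add, transpose_mulVec_single,
    transpose_mulVec_single]

end Matrix

/-- Single-edge influence on a single node's output for linear GCN: with
`H := Xᵀ Cᵀ C X` invertible, weighted inner products `⟨a, b⟩_{H⁻¹} := aᵀ H⁻¹ b`,
`Ξ := e_i e_jᵀ + e_j e_iᵀ`, `w*(ε) := (Xᵀ (C + εΞ)ᵀ (C + εΞ) X)⁻¹ Xᵀ (C + εΞ)ᵀ y`,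
`w* := w*(0)`, and `P(ε) := (C + εΞ) X w*(ε)`, for every node `k` the `k`-th coordinate
of the derivative of `P` at `ε = 0` equals
`1{k = i}(x_jᵀ w*) + 1{k = j}(x_iᵀ w*) − ⟨(x_jᵀ w*) z_i + (x_iᵀ w*) z_j, z_k⟩_{H⁻¹}
 + ⟨(y_j − z_jᵀ w*) x_i + (y_i − z_iᵀ w*) x_j, z_k⟩_{H⁻¹}`,
where `z_l` is the `l`-th row of `Z := C X`. -/
theorem single_edge_influence_on_node_output (n d : ℕ) (C : Matrix (Fin n) (Fin n) ℝ)
    (X : Matrix (Fin n) (Fin d) ℝ) (y : Fin n → ℝ) (i j : Fin n)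
    (Ξ : Matrix (Fin n) (Fin n) ℝ)
    (hΞ : Ξ = vecMulVec (Pi.single i (1 : ℝ)) (Pi.single j (1 : ℝ))
            + vecMulVec (Pi.single j (1 : ℝ)) (Pi.single i (1 : ℝ)))
    (hH : Invertible (Xᵀ * Cᵀ * C * X))
    (wstar : Fin d → ℝ)
    (hw : wstar = (Xᵀ * Cᵀ * C * X)⁻¹.mulVec ((Xᵀ * Cᵀ).mulVec y)) :
    ∀ k : Fin n,
      HasDerivAt
        (fun ε : ℝ =>
          ((C + ε • Ξ) * X).mulVec
            ((Xᵀ * (C + ε • Ξ)ᵀ * (C + ε • Ξ) * X)⁻¹.mulVec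
              ((Xᵀ * (C + ε • Ξ)ᵀ).mulVec y)) k)
        ((if k = i then X j ⬝ᵥ wstar else 0) + (if k = j then X i ⬝ᵥ wstar else 0)
          - ((X j ⬝ᵥ wstar) • (C * X) i + (X i ⬝ᵥ wstar) • (C * X) j) ⬝ᵥ
              (Xᵀ * Cᵀ * C * X)⁻¹.mulVec ((C * X) k)
          + ((y j - (C * X) j ⬝ᵥ wstar) • X i + (y i - (C * X) i ⬝ᵥ wstar) • X j) ⬝ᵥ
              (Xᵀ * Cᵀ * C * X)⁻¹.mulVec ((C * X) k)) 0 := by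
  intro k
  rw [← single_eq_single_vecMulVec_single, ← single_eq_single_vecMulVec_single] at hΞ
  have hZ : HasDerivAt (fun ε : ℝ => (C + ε • Ξ) * X) (Ξ * X) 0 := by
    simpa using (((hasDerivAt_id (0 : ℝ)).smul_const Ξ).const_add C).matrix_mul
      (hasDerivAt_const 0 X)
  have hHZ : (C * X)ᵀ * (C * X) = Xᵀ * Cᵀ * C * X := by
    simp only [transpose_mul, Matrix.mul_assoc]
  have hunit : IsUnit ((C * X)ᵀ * (C * X)).det := hHZ ▸ isUnit_det_of_invertible _
  have hwstar : leastSquares (C * X) y = wstar := by rw [hw, leastSquares_mul]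
  have hfit := hasDerivAt_pi.1 (hZ.matrix_mulVec (hZ.leastSquares (by simpa using hunit) y)) k
  simp only [zero_smul, add_zero, leastSquares_mul, hwstar, hHZ] at hfit
  refine hfit.congr_deriv ?_
  have hsymm : (Xᵀ * Cᵀ * C * X)⁻¹.IsSymm := hHZ ▸ IsSymm.inv (transpose_mul (C * X)ᵀ (C * X))
  rw [hΞ, single_add_single_mul_mulVec, transpose_single_add_single_mul_mulVec, mulVec_add,
    transpose_mulVec_single, transpose_mulVec_single]
  simp only [Pi.add_apply, Pi.sub_apply, Pi.single_apply, mulVec_apply, row,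
    hsymm.dotProduct_mulVec_comm ((C * X) k), sub_dotProduct]
  ring
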